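/- arXiv:2310.19984 — 6 statements merged into one kernel-verified Lean document; each statement's English description precedes it below -/
import Mathlib

section
/- With α = e^{-κ_a τ}, β = e^{-κ_e τ}, C₁(n), C₂(n) as in the equi-multiple-dose Bateman solution, the area under the curve over I_n = [(n-1)τ, nτ] equals (κ_a d γ/(κ_a - κ_e))[(1-β^n)/κ_e - (1-α^n)/κ_a]. -/
open Real

lemma integral_exp_neg_mul_sub_left (κ a τ : ℝ) (hκ : κ ≠ 0) :
    ∫ t in a..a + τ, exp (-κ * (t - a)) = (1 - exp (-κ * τ)) / κ := by
  rw [intervalIntegral.integral_comp_sub_right (fun t => exp (-κ * t)), sub_self, add_sub_cancel_left,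
    intervalIntegral.integral_comp_mul_left exp (neg_ne_zero.mpr hκ), integral_exp]
  simp only [smul_eq_mul, mul_zero, exp_zero]
  field_simp
  ring

lemma one_sub_exp_neg_mul_ne_zero {κ τ : ℝ} (hκ : κ ≠ 0) (hτ : τ ≠ 0) : 1 - exp (-κ * τ) ≠ 0 :=
  sub_ne_zero.mpr fun h => mul_ne_zero (neg_ne_zero.mpr hκ) hτ (exp_eq_one_iff _ |>.mp h.symm)

/-- The factor `1 - exp (-κ τ)` produced by the integral cancels the denominator of the
geometric-sum coefficient `(1 - exp (-κ τ) ^ n) / (1 - exp (-κ τ))` of the Bateman solution. -/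
lemma integral_geom_sum_mul_exp {κ τ : ℝ} (hκ : κ ≠ 0) (hτ : τ ≠ 0) (c q a : ℝ) :
    ∫ t in a..a + τ, c * (q / (1 - exp (-κ * τ))) * exp (-κ * (t - a)) = c * (q / κ) := by
  rw [intervalIntegral.integral_const_mul, integral_exp_neg_mul_sub_left κ a τ hκ, mul_assoc,
    div_mul_div_cancel₀ (one_sub_exp_neg_mul_ne_zero hκ hτ)]

theorem AUC_In_general (κa κe γ d τ : ℝ) (hκa : 0 < κa) (hκe : 0 < κe) (hτ : 0 < τ)
    (α β : ℝ) (hα : α = Real.exp (-κa * τ)) (hβ : β = Real.exp (-κe * τ))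
    (n : ℕ) :
    (∫ t in (((n : ℝ) - 1) * τ)..((n : ℝ) * τ),
      ((κa * γ * d / (κa - κe)) * ((1 - β ^ n) / (1 - β)) *
          Real.exp (-κe * (t - ((n : ℝ) - 1) * τ)) -
       (κa * γ * d / (κa - κe)) * ((1 - α ^ n) / (1 - α)) *
          Real.exp (-κa * (t - ((n : ℝ) - 1) * τ))))
      = (κa * d * γ / (κa - κe)) * ((1 - β ^ n) / κe - (1 - α ^ n) / κa) := by
  subst hα hβ
  have hend : (n : ℝ) * τ = ((n : ℝ) - 1) * τ + τ := by ring
  have hint (κ c : ℝ) : IntervalIntegrable (fun t => c * exp (-κ * (t - ((n : ℝ) - 1) * τ)))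
      MeasureTheory.volume (((n : ℝ) - 1) * τ) ((n : ℝ) * τ) :=
    (by fun_prop : Continuous _).intervalIntegrable _ _
  rw [intervalIntegral.integral_sub (hint _ _) (hint _ _), hend,
    integral_geom_sum_mul_exp hκe.ne' hτ.ne',
    integral_geom_sum_mul_exp hκa.ne' hτ.ne']
  ring

theorem AUC_In (κa κe γ d τ : ℝ) (hκa : 0 < κa) (hκe : 0 < κe) (hne : κa ≠ κe)
    (hγ : 0 < γ) (hd : 0 < d) (hτ : 0 < τ)
    (α β : ℝ) (hα : α = Real.exp (-κa * τ)) (hβ : β = Real.exp (-κe * τ))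
    (n : ℕ) (hn : 1 ≤ n) :
    (∫ t in (((n : ℝ) - 1) * τ)..((n : ℝ) * τ),
      ((κa * γ * d / (κa - κe)) * ((1 - β ^ n) / (1 - β)) *
          Real.exp (-κe * (t - ((n : ℝ) - 1) * τ)) -
       (κa * γ * d / (κa - κe)) * ((1 - α ^ n) / (1 - α)) *
          Real.exp (-κa * (t - ((n : ℝ) - 1) * τ))))
      = (κa * d * γ / (κa - κe)) * ((1 - β ^ n) / κe - (1 - α ^ n) / κa) :=
  AUC_In_general κa κe γ d τ hκa hκe hτ α β hα hβ n
end

section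
/- If κ_a > κ_e > 0 and τ > 0, with α = e^{-κ_a τ}, β = e^{-κ_e τ}, then κ_a (1 - β) > κ_e (1 - α). -/
/-! Scaling by `τ`, the inequality is strict convexity of `exp` at `-κe τ`, written as the convex
combination `(κe / κa) • (-κa τ) + (1 - κe / κa) • 0`. -/

open Real

theorem mul_one_sub_exp_neg_lt {x y : ℝ} (hx : 0 < x) (hxy : x < y) :
    x * (1 - exp (-y)) < y * (1 - exp (-x)) := by
  have hy : 0 < y := hx.trans hxy
  have hcomb : (x / y) • -y + ((y - x) / y) • (0 : ℝ) = -x := by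
    simp [div_mul_cancel₀ x hy.ne']
  have hconv := strictConvexOn_exp.2 (Set.mem_univ (-y)) (Set.mem_univ 0) (by linarith)
    (div_pos hx hy) (div_pos (sub_pos.2 hxy) hy) (by field_simp; ring)
  rw [hcomb, exp_zero, smul_eq_mul, smul_eq_mul, mul_one, div_mul_eq_mul_div, ← add_div,
    lt_div_iff₀ hy] at hconv
  linarith

theorem key_inequality (κa κe τ : ℝ) (h1 : κa > κe) (h2 : κe > 0) (hτ : 0 < τ) :
    κa * (1 - Real.exp (-κe * τ)) > κe * (1 - Real.exp (-κa * τ)) := by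
  have h := mul_one_sub_exp_neg_lt (mul_pos h2 hτ) (mul_lt_mul_of_pos_right h1 hτ)
  rw [← neg_mul, ← neg_mul, mul_right_comm, mul_right_comm κa] at h
  exact lt_of_mul_lt_mul_right h hτ.le
end

section
/- Suppose κ_a > κ_e > 0, d, γ > 0, and define SS_low(τ) = (κ_a d γ/(κ_a - κ_e))[β/(1-β) - α/(1-α)] with α = e^{-κ_a τ}, β = e^{-κ_e τ}. Then SS_low is strictly decreasing in τ on (0, ∞) and tends to 0 as τ → ∞. -/
/-! Writing `β / (1 - β) = (e^{κₑτ} - 1)⁻¹`, `SS_low` is a positive multiple of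
`F (κₑτ) - F (κₐτ)` with `F x = (eˣ - 1)⁻¹`. Since `F' x = -1 / φ x` for `φ x = eˣ + e⁻ˣ - 2`,
the derivative of `τ ↦ F (kτ)` is `-(τ · φ (kτ) / (kτ))⁻¹`. As `φ 0 = 0`, `φ x / x` is a secant
slope of the strictly convex `φ`, hence strictly increasing on `(0, ∞)`; this makes the derivative
of `SS_low` negative when `κₑ < κₐ`. Both terms tend to `0` as `τ → ∞`. -/

open Real Set Filter

lemma strictConvexOn_exp_add_exp_neg : StrictConvexOn ℝ univ (fun x => exp x + exp (-x)) :=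
  strictConvexOn_exp.add_convexOn (convexOn_exp.comp_linearMap (-LinearMap.id))

lemma strictMonoOn_exp_add_exp_neg_sub_two_div :
    StrictMonoOn (fun x => (exp x + exp (-x) - 2) / x) (Ioi 0) := by
  intro x hx y hy hxy
  have := strictConvexOn_exp_add_exp_neg.secant_strict_mono (a := 0) (mem_univ _) (mem_univ x)
    (mem_univ y) hx.ne' hy.ne' hxy
  simpa [one_add_one_eq_two] using this

lemma exp_add_exp_neg_sub_two (x : ℝ) : exp x + exp (-x) - 2 = (exp x - 1) ^ 2 / exp x := by
  rw [exp_neg]; field_simp; ring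

lemma exp_neg_div_one_sub_exp_neg (x : ℝ) : exp (-x) / (1 - exp (-x)) = (exp x - 1)⁻¹ := by
  rw [exp_neg, div_eq_mul_inv, ← mul_inv, mul_sub, mul_one, mul_inv_cancel₀ (exp_pos x).ne']

lemma exp_sub_one_ne_zero {x : ℝ} (hx : x ≠ 0) : exp x - 1 ≠ 0 := by
  rwa [sub_ne_zero, Ne, exp_eq_one_iff]

lemma hasDerivAt_inv_exp_sub_one {x : ℝ} (hx : x ≠ 0) :
    HasDerivAt (fun x => (exp x - 1)⁻¹) (-(exp x + exp (-x) - 2)⁻¹) x := by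
  refine (((hasDerivAt_exp x).sub_const 1).inv (exp_sub_one_ne_zero hx)).congr_deriv ?_
  rw [exp_add_exp_neg_sub_two, inv_div]
  ring

lemma strictAntiOn_inv_exp_mul_sub_one_sub {a b : ℝ} (ha : 0 < a) (hab : a < b) :
    StrictAntiOn (fun τ => (exp (a * τ) - 1)⁻¹ - (exp (b * τ) - 1)⁻¹) (Ioi 0) := by
  set q : ℝ → ℝ := fun x => (exp x + exp (-x) - 2) / x
  have hq : ∀ x, 0 < x → 0 < q x := fun x hx => by
    have := exp_sub_one_ne_zero hx.ne'
    simp only [q, exp_add_exp_neg_sub_two]; positivity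
  have hderiv : ∀ k, 0 < k → ∀ τ ∈ Ioi (0 : ℝ),
      HasDerivAt (fun τ => (exp (k * τ) - 1)⁻¹) (-(τ * q (k * τ))⁻¹) τ := by
    intro k hk τ hτ
    have hkτ : k * τ ≠ 0 := (mul_pos hk hτ).ne'
    refine ((hasDerivAt_inv_exp_sub_one hkτ).comp τ
      ((hasDerivAt_id τ).const_mul k)).congr_deriv ?_
    have hτ0 : τ ≠ 0 := ne_of_gt hτ
    simp only [q, mul_one]
    field_simp
  have hderiv' : ∀ τ ∈ Ioi (0 : ℝ), HasDerivAt (fun τ => (exp (a * τ) - 1)⁻¹ - (exp (b * τ) - 1)⁻¹)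
      (-(τ * q (a * τ))⁻¹ - -(τ * q (b * τ))⁻¹) τ :=
    fun τ hτ => (hderiv a ha τ hτ).sub (hderiv b (ha.trans hab) τ hτ)
  refine strictAntiOn_of_hasDerivWithinAt_neg (convex_Ioi 0)
    (fun τ hτ => (hderiv' τ hτ).continuousAt.continuousWithinAt)
    (fun τ hτ => (hderiv' τ (interior_subset hτ)).hasDerivWithinAt) ?_
  intro τ hτ
  rw [interior_Ioi] at hτ
  have haτ : 0 < a * τ := mul_pos ha hτ
  have hab' : a * τ < b * τ := by gcongr
  have hlt : q (a * τ) < q (b * τ) :=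
    strictMonoOn_exp_add_exp_neg_sub_two_div haτ (haτ.trans hab') hab'
  have hqa := hq _ haτ
  rw [sub_neg, neg_lt_neg_iff]
  exact inv_strictAnti₀ (mul_pos hτ hqa) (mul_lt_mul_of_pos_left hlt hτ)

lemma tendsto_inv_exp_mul_sub_one_atTop {k : ℝ} (hk : 0 < k) :
    Tendsto (fun τ => (exp (k * τ) - 1)⁻¹) atTop (nhds 0) :=
  tendsto_inv_atTop_zero.comp <| tendsto_atTop_add_const_right _ _ <|
    tendsto_exp_atTop.comp (tendsto_id.const_mul_atTop hk)

theorem SSlow_decreasing (κa κe d γ : ℝ) (h1 : κa > κe) (h2 : κe > 0)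
    (hd : 0 < d) (hγ : 0 < γ) (SSlow : ℝ → ℝ)
    (hSS : ∀ τ : ℝ, SSlow τ =
      (κa * d * γ / (κa - κe)) *
        (Real.exp (-κe * τ) / (1 - Real.exp (-κe * τ)) -
         Real.exp (-κa * τ) / (1 - Real.exp (-κa * τ)))) :
    StrictAntiOn SSlow (Set.Ioi 0) ∧
    Filter.Tendsto SSlow Filter.atTop (nhds 0) := by
  have hκa : 0 < κa := h2.trans h1
  set C := κa * d * γ / (κa - κe)
  have hC : 0 < C := div_pos (by positivity) (sub_pos.2 h1)
  have hSSlow : SSlow = fun τ => C * ((exp (κe * τ) - 1)⁻¹ - (exp (κa * τ) - 1)⁻¹) := by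
    funext τ
    simp only [hSS, neg_mul, exp_neg_div_one_sub_exp_neg]
  subst hSSlow
  refine ⟨fun x hx y hy hxy =>
    mul_lt_mul_of_pos_left (strictAntiOn_inv_exp_mul_sub_one_sub h2 h1 hx hy hxy) hC, ?_⟩
  simpa using ((tendsto_inv_exp_mul_sub_one_atTop h2).sub
    (tendsto_inv_exp_mul_sub_one_atTop hκa)).const_mul C
end

section
/- For fixed τ > 0, the function g(x) = x e^{xτ}/(e^{xτ} - 1) is strictly increasing on (0, ∞); consequently, for a > b > 0, with z = 1 - e^{-aτ} and w = 1 - e^{-bτ}, one has a·w - b·z > 0. -/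
open Real

/-- Key inequality: for `0 < v < u`, `v * (1 - exp (-u)) < u * (1 - exp (-v))`,
i.e. `(1 - exp (-u))/u` is strictly decreasing. -/
lemma key_ineq {u v : ℝ} (hv : 0 < v) (huv : v < u) :
    v * (1 - Real.exp (-u)) < u * (1 - Real.exp (-v)) := by
  have h := strictConvexOn_exp.secant_strict_mono (a := (0:ℝ)) (x := -u) (y := -v)
    (Set.mem_univ _) (Set.mem_univ _) (Set.mem_univ _)
    (by linarith) (by linarith) (by linarith)
  rw [Real.exp_zero] at h
  have h1 : (Real.exp (-u) - 1) / (-u - 0) = (1 - Real.exp (-u)) / u := by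
    rw [← neg_div_neg_eq]; ring_nf
  have h2 : (Real.exp (-v) - 1) / (-v - 0) = (1 - Real.exp (-v)) / v := by
    rw [← neg_div_neg_eq]; ring_nf
  rw [h1, h2] at h
  rw [div_lt_div_iff₀ (by linarith) hv] at h
  linarith

theorem aux_strictMono_and_ineq (τ : ℝ) (hτ : 0 < τ) :
    StrictMonoOn (fun x : ℝ => x * Real.exp (x * τ) / (Real.exp (x * τ) - 1))
      (Set.Ioi 0) ∧
    ∀ a b : ℝ, b > 0 → a > b →
      a * (1 - Real.exp (-b * τ)) - b * (1 - Real.exp (-a * τ)) > 0 := by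
  have key : ∀ a b : ℝ, 0 < b → b < a →
      b * (1 - Real.exp (-(a * τ))) < a * (1 - Real.exp (-(b * τ))) := by
    intro a b hb hba
    nlinarith [key_ineq (mul_pos hb hτ) (mul_lt_mul_of_pos_right hba hτ), hτ]
  constructor
  · intro b hb a ha hba
    simp only [Set.mem_Ioi] at hb ha
    have hk := key a b hb hba
    have hea : 1 < Real.exp (a * τ) := by
      rw [← Real.exp_zero]; exact Real.exp_lt_exp.2 (by positivity)
    have heb : 1 < Real.exp (b * τ) := by
      rw [← Real.exp_zero]; exact Real.exp_lt_exp.2 (by positivity)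
    simp only
    rw [div_lt_div_iff₀ (by linarith) (by linarith)]
    -- goal: b * exp (bτ) * (exp (aτ) - 1) < a * exp (aτ) * (exp (bτ) - 1)
    have ha' : Real.exp (-(a * τ)) = (Real.exp (a * τ))⁻¹ := Real.exp_neg _
    have hb' : Real.exp (-(b * τ)) = (Real.exp (b * τ))⁻¹ := Real.exp_neg _
    rw [ha', hb'] at hk
    have hpa : (0:ℝ) < Real.exp (a * τ) := Real.exp_pos _
    have hpb : (0:ℝ) < Real.exp (b * τ) := Real.exp_pos _
    have q1 : Real.exp (-(a * τ)) * (Real.exp (a * τ) * Real.exp (b * τ))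
        = Real.exp (b * τ) := by
      rw [← Real.exp_add, ← Real.exp_add,
        show -(a * τ) + (a * τ + b * τ) = b * τ by ring]
    have q2 : Real.exp (-(b * τ)) * (Real.exp (a * τ) * Real.exp (b * τ))
        = Real.exp (a * τ) := by
      rw [← Real.exp_add, ← Real.exp_add,
        show -(b * τ) + (a * τ + b * τ) = a * τ by ring]
    rw [← ha', ← hb'] at hk
    have hk3 := mul_lt_mul_of_pos_right hk (mul_pos hpa hpb)
    nlinarith [hk3, q1, q2, hb, ha, hpa, hpb]
  · intro a b hb hba
    have hk := key a b hb hba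
    rw [neg_mul, neg_mul]
    linarith
end

section
/- Let κ_a > κ_e > 0 and set p₁ = -κ_a/(κ_a-κ_e), p₂ = -κ_e/(κ_a-κ_e). Define for τ > 0: Ψ(τ) = β/(1-β) - α/(1-α) and Φ(τ) = (1/(1-β)) g(τ)^{p₂} - (1/(1-α)) g(τ)^{p₁}, where α = e^{-κ_a τ}, β = e^{-κ_e τ}, g(τ) = κ_a(1-β)/(κ_e(1-α)). Then f(τ) = Φ(τ)/Ψ(τ) is continuous on (0, ∞), satisfies lim_{τ→0⁺} f(τ) = 1 and lim_{τ→∞} f(τ) = ∞, and hence its range contains (1, ∞). -/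
/-!
Write `R κ τ = 1 / (1 - e^{-κτ})` for the accumulation factor, so that `Ψ = R κe - R κa` and
`Φ = R κe · g ^ p₂ - R κa · g ^ p₁`. As `τ → 0⁺` we have `τ R κ τ → 1/κ` and `g → 1`, so `τ Φ` and
`τ Ψ` both tend to `1/κe - 1/κa ≠ 0` and `f → 1`. As `τ → ∞`, `R κ → 1` and `g → κa/κe > 1`, so
`Φ → (κa/κe)^p₂ - (κa/κe)^p₁ > 0` (as `p₁ < p₂`) while `Ψ → 0⁺`, hence `f → ∞`. The intermediate
value theorem on the connected set `(0, ∞)` then gives every value in `(1, ∞)`.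
-/

open Filter Real Set Topology

namespace Bateman

variable {a e k τ : ℝ}

/-- In the notation of the statement, `1/(1-α) = accumulation κa τ` and
`1/(1-β) = accumulation κe τ`. -/
noncomputable def accumulation (k τ : ℝ) : ℝ := 1 / (1 - exp (-k * τ))

/-- The function `g` of the statement: `g τ = exp ((κa - κe) * tmax)` for the time `tmax` of the
steady-state peak, so that `g τ ^ p₂ = exp (-κe * tmax)` and `g τ ^ p₁ = exp (-κa * tmax)`. -/
noncomputable def peakTimeFactor (a e τ : ℝ) : ℝ :=
  a * (1 - exp (-e * τ)) / (e * (1 - exp (-a * τ)))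

/-- `peak` and `trough` are `Φ` and `Ψ` of the statement: up to a common positive factor, the
steady-state concentrations at the peak time and at the end of a dosing interval. -/
noncomputable def peak (a e p₁ p₂ τ : ℝ) : ℝ :=
  accumulation e τ * peakTimeFactor a e τ ^ p₂ - accumulation a τ * peakTimeFactor a e τ ^ p₁

noncomputable def trough (a e τ : ℝ) : ℝ :=
  exp (-e * τ) / (1 - exp (-e * τ)) - exp (-a * τ) / (1 - exp (-a * τ))

lemma one_sub_exp_neg_mul_ne_zero (hk : k ≠ 0) (hτ : τ ≠ 0) : 1 - exp (-k * τ) ≠ 0 := by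
  rw [sub_ne_zero, ne_comm, Ne, exp_eq_one_iff]
  exact mul_ne_zero (neg_ne_zero.2 hk) hτ

lemma one_sub_exp_neg_mul_pos (hk : 0 < k) (hτ : 0 < τ) : 0 < 1 - exp (-k * τ) := by
  rw [sub_pos, exp_lt_one_iff]
  nlinarith

lemma accumulation_ne_zero (hk : k ≠ 0) (hτ : τ ≠ 0) : accumulation k τ ≠ 0 :=
  one_div_ne_zero (one_sub_exp_neg_mul_ne_zero hk hτ)

lemma accumulation_lt_accumulation (he : 0 < e) (hea : e < a) (hτ : 0 < τ) :
    accumulation a τ < accumulation e τ := by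
  refine one_div_lt_one_div_of_lt (one_sub_exp_neg_mul_pos he hτ) ?_
  gcongr

lemma continuousOn_accumulation (hk : k ≠ 0) : ContinuousOn (accumulation k) {0}ᶜ :=
  continuousOn_const.div (by fun_prop) fun _ hτ => one_sub_exp_neg_mul_ne_zero hk hτ

lemma tendsto_mul_accumulation_nhdsNE_zero (hk : k ≠ 0) :
    Tendsto (fun τ => τ * accumulation k τ) (𝓝[≠] 0) (𝓝 k⁻¹) := by
  have hderiv : HasDerivAt (fun τ => 1 - exp (-k * τ)) k 0 := by
    simpa using (((hasDerivAt_id (0 : ℝ)).const_mul (-k)).exp).const_sub 1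
  refine ((hasDerivAt_iff_tendsto_slope.1 hderiv).inv₀ hk).congr' ?_
  filter_upwards with τ
  simp [slope_def_field, accumulation, div_eq_mul_inv]

lemma tendsto_accumulation_atTop (hk : 0 < k) : Tendsto (accumulation k) atTop (𝓝 1) := by
  unfold accumulation
  have hexp : Tendsto (fun τ => exp (-k * τ)) atTop (𝓝 0) :=
    tendsto_exp_atBot.comp (tendsto_id.const_mul_atTop_of_neg (neg_neg_of_pos hk))
  simpa using (hexp.const_sub 1).inv₀ (by simp)

lemma peakTimeFactor_eq (a e τ : ℝ) :
    peakTimeFactor a e τ = a * accumulation a τ / (e * accumulation e τ) := by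
  simp only [peakTimeFactor, accumulation, div_eq_mul_inv, mul_inv, inv_inv]
  ring

lemma peakTimeFactor_ne_zero (ha : a ≠ 0) (he : e ≠ 0) (hτ : τ ≠ 0) :
    peakTimeFactor a e τ ≠ 0 := by
  rw [peakTimeFactor_eq]
  have := accumulation_ne_zero ha hτ
  have := accumulation_ne_zero he hτ
  positivity

lemma continuousOn_peakTimeFactor (ha : a ≠ 0) (he : e ≠ 0) :
    ContinuousOn (peakTimeFactor a e) {0}ᶜ := by
  have h : ContinuousOn (fun τ => a * accumulation a τ / (e * accumulation e τ)) {0}ᶜ :=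
    (continuousOn_const.mul (continuousOn_accumulation ha)).div
      (continuousOn_const.mul (continuousOn_accumulation he))
      fun τ hτ => mul_ne_zero he (accumulation_ne_zero he hτ)
  exact h.congr fun τ _ => peakTimeFactor_eq a e τ

lemma tendsto_peakTimeFactor_nhdsNE_zero (ha : a ≠ 0) (he : e ≠ 0) :
    Tendsto (peakTimeFactor a e) (𝓝[≠] 0) (𝓝 1) := by
  have hlim := ((tendsto_mul_accumulation_nhdsNE_zero ha).const_mul a).div
    ((tendsto_mul_accumulation_nhdsNE_zero he).const_mul e) (by simp [he])
  rw [mul_inv_cancel₀ ha, mul_inv_cancel₀ he, div_one] at hlim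
  refine hlim.congr' ?_
  filter_upwards [self_mem_nhdsWithin] with τ hτ
  rw [Pi.div_apply, peakTimeFactor_eq, mul_left_comm a, mul_left_comm e,
    mul_div_mul_left _ _ hτ]

lemma tendsto_peakTimeFactor_atTop (ha : 0 < a) (he : 0 < e) :
    Tendsto (peakTimeFactor a e) atTop (𝓝 (a / e)) := by
  have hlim := ((tendsto_accumulation_atTop ha).const_mul a).div
    ((tendsto_accumulation_atTop he).const_mul e) (by simp [he.ne'])
  rw [mul_one, mul_one] at hlim
  exact hlim.congr fun τ => (peakTimeFactor_eq a e τ).symm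

lemma trough_eq (ha : a ≠ 0) (he : e ≠ 0) (τ : ℝ) :
    trough a e τ = accumulation e τ - accumulation a τ := by
  rcases eq_or_ne τ 0 with rfl | hτ
  · simp [trough, accumulation]
  have key : ∀ x : ℝ, 1 - x ≠ 0 → x / (1 - x) = 1 / (1 - x) - 1 := fun x hx => by
    rw [div_sub_one hx, sub_sub_cancel]
  rw [trough, accumulation, accumulation, key _ (one_sub_exp_neg_mul_ne_zero he hτ),
    key _ (one_sub_exp_neg_mul_ne_zero ha hτ), sub_sub_sub_cancel_right]

lemma trough_pos (he : 0 < e) (hea : e < a) (hτ : 0 < τ) : 0 < trough a e τ := by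
  rw [trough_eq (he.trans hea).ne' he.ne', sub_pos]
  exact accumulation_lt_accumulation he hea hτ

lemma continuousOn_peak (ha : a ≠ 0) (he : e ≠ 0) (p₁ p₂ : ℝ) :
    ContinuousOn (peak a e p₁ p₂) {0}ᶜ := by
  have hg := continuousOn_peakTimeFactor ha he
  have hg_ne : ∀ τ ∈ ({0}ᶜ : Set ℝ), peakTimeFactor a e τ ≠ 0 := fun _ hτ =>
    peakTimeFactor_ne_zero ha he hτ
  exact ((continuousOn_accumulation he).mul (hg.rpow_const fun τ hτ => .inl (hg_ne τ hτ))).sub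
    ((continuousOn_accumulation ha).mul (hg.rpow_const fun τ hτ => .inl (hg_ne τ hτ)))

lemma continuousOn_trough (ha : a ≠ 0) (he : e ≠ 0) : ContinuousOn (trough a e) {0}ᶜ :=
  ((continuousOn_accumulation he).sub (continuousOn_accumulation ha)).congr fun τ _ =>
    trough_eq ha he τ

lemma continuousOn_peak_div_trough (he : 0 < e) (hea : e < a) (p₁ p₂ : ℝ) :
    ContinuousOn (peak a e p₁ p₂ / trough a e) (Ioi 0) := by
  have ha := he.trans hea
  have hsub : Ioi (0 : ℝ) ⊆ {0}ᶜ := fun _ hτ => ne_of_gt hτ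
  exact ((continuousOn_peak ha.ne' he.ne' p₁ p₂).mono hsub).div
    ((continuousOn_trough ha.ne' he.ne').mono hsub) fun _ hτ => (trough_pos he hea hτ).ne'

lemma tendsto_mul_accumulation_sub_nhdsNE_zero (ha : a ≠ 0) (he : e ≠ 0) {x y : ℝ → ℝ}
    (hx : Tendsto x (𝓝[≠] 0) (𝓝 1)) (hy : Tendsto y (𝓝[≠] 0) (𝓝 1)) :
    Tendsto (fun τ => τ * (accumulation e τ * x τ - accumulation a τ * y τ)) (𝓝[≠] 0)
      (𝓝 (e⁻¹ - a⁻¹)) := by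
  have hlim := ((tendsto_mul_accumulation_nhdsNE_zero he).mul hx).sub
    ((tendsto_mul_accumulation_nhdsNE_zero ha).mul hy)
  rw [mul_one, mul_one] at hlim
  exact hlim.congr fun τ => by ring

lemma tendsto_mul_peak_nhdsNE_zero (ha : a ≠ 0) (he : e ≠ 0) (p₁ p₂ : ℝ) :
    Tendsto (fun τ => τ * peak a e p₁ p₂ τ) (𝓝[≠] 0) (𝓝 (e⁻¹ - a⁻¹)) := by
  have hg := tendsto_peakTimeFactor_nhdsNE_zero ha he
  exact tendsto_mul_accumulation_sub_nhdsNE_zero ha he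
    (by simpa using hg.rpow_const (p := p₂) (.inl one_ne_zero))
    (by simpa using hg.rpow_const (p := p₁) (.inl one_ne_zero))

lemma tendsto_mul_trough_nhdsNE_zero (ha : a ≠ 0) (he : e ≠ 0) :
    Tendsto (fun τ => τ * trough a e τ) (𝓝[≠] 0) (𝓝 (e⁻¹ - a⁻¹)) := by
  simpa [trough_eq ha he] using
    tendsto_mul_accumulation_sub_nhdsNE_zero ha he tendsto_const_nhds tendsto_const_nhds

lemma tendsto_div_of_tendsto_mul {α : Type*} {l : Filter α} {h u v : α → ℝ} {c : ℝ} (hc : c ≠ 0)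
    (hh : ∀ᶠ x in l, h x ≠ 0) (hu : Tendsto (fun x => h x * u x) l (𝓝 c))
    (hv : Tendsto (fun x => h x * v x) l (𝓝 c)) : Tendsto (u / v) l (𝓝 1) := by
  rw [← div_self hc]
  refine (hu.div hv hc).congr' ?_
  filter_upwards [hh] with x hx
  exact mul_div_mul_left _ _ hx

lemma tendsto_peak_div_trough_nhdsNE_zero (ha : a ≠ 0) (he : e ≠ 0) (hae : a ≠ e) (p₁ p₂ : ℝ) :
    Tendsto (peak a e p₁ p₂ / trough a e) (𝓝[≠] 0) (𝓝 1) :=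
  tendsto_div_of_tendsto_mul (sub_ne_zero.2 (inv_injective.ne hae.symm))
    self_mem_nhdsWithin (tendsto_mul_peak_nhdsNE_zero ha he p₁ p₂)
    (tendsto_mul_trough_nhdsNE_zero ha he)

lemma tendsto_peak_atTop (ha : 0 < a) (he : 0 < e) (p₁ p₂ : ℝ) :
    Tendsto (peak a e p₁ p₂) atTop (𝓝 ((a / e) ^ p₂ - (a / e) ^ p₁)) := by
  have hg := tendsto_peakTimeFactor_atTop ha he
  have hae : a / e ≠ 0 := by positivity
  have h := ((tendsto_accumulation_atTop he).mul (hg.rpow_const (p := p₂) (.inl hae))).sub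
    ((tendsto_accumulation_atTop ha).mul (hg.rpow_const (p := p₁) (.inl hae)))
  rwa [one_mul, one_mul] at h

lemma tendsto_trough_atTop (he : 0 < e) (hea : e < a) :
    Tendsto (trough a e) atTop (𝓝[>] 0) := by
  have ha := he.trans hea
  refine tendsto_nhdsWithin_iff.2 ⟨?_, ?_⟩
  · have h := (tendsto_accumulation_atTop he).sub (tendsto_accumulation_atTop ha)
    rw [sub_self] at h
    exact h.congr fun τ => (trough_eq ha.ne' he.ne' τ).symm
  · filter_upwards [eventually_gt_atTop 0] with τ hτ using trough_pos he hea hτ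

lemma tendsto_peak_div_trough_atTop (he : 0 < e) (hea : e < a) {p₁ p₂ : ℝ} (hp : p₁ < p₂) :
    Tendsto (peak a e p₁ p₂ / trough a e) atTop atTop := by
  have hL : 0 < (a / e) ^ p₂ - (a / e) ^ p₁ :=
    sub_pos.2 (rpow_lt_rpow_of_exponent_lt ((one_lt_div he).2 hea) hp)
  rw [div_eq_mul_inv]
  exact (tendsto_peak_atTop (he.trans hea) he p₁ p₂).pos_mul_atTop hL
    (tendsto_trough_atTop he hea).inv_tendsto_nhdsGT_zero

end Bateman

theorem ratio_range (κa κe : ℝ) (h1 : κa > κe) (h2 : κe > 0)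
    (p₁ p₂ : ℝ) (hp1 : p₁ = -κa / (κa - κe)) (hp2 : p₂ = -κe / (κa - κe))
    (g Ψ Φ f : ℝ → ℝ)
    (hg : ∀ τ : ℝ, g τ =
      κa * (1 - Real.exp (-κe * τ)) / (κe * (1 - Real.exp (-κa * τ))))
    (hΨ : ∀ τ : ℝ, Ψ τ =
      Real.exp (-κe * τ) / (1 - Real.exp (-κe * τ)) -
        Real.exp (-κa * τ) / (1 - Real.exp (-κa * τ)))
    (hΦ : ∀ τ : ℝ, Φ τ =
      (1 / (1 - Real.exp (-κe * τ))) * g τ ^ p₂ -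
        (1 / (1 - Real.exp (-κa * τ))) * g τ ^ p₁)
    (hf : ∀ τ : ℝ, f τ = Φ τ / Ψ τ) :
    ContinuousOn f (Set.Ioi 0) ∧
    Filter.Tendsto f (nhdsWithin 0 (Set.Ioi 0)) (nhds 1) ∧
    Filter.Tendsto f Filter.atTop Filter.atTop ∧
    Set.Ioi (1 : ℝ) ⊆ f '' Set.Ioi 0 := by
  obtain rfl : f = Bateman.peak κa κe p₁ p₂ / Bateman.trough κa κe := funext fun τ => by
    simp only [hf, hΦ, hΨ, hg, Pi.div_apply, Bateman.peak, Bateman.trough,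
      Bateman.peakTimeFactor, Bateman.accumulation]
  have hp : p₁ < p₂ := by
    rw [hp1, hp2]
    exact div_lt_div_of_pos_right (neg_lt_neg h1) (sub_pos.2 h1)
  have hcont := Bateman.continuousOn_peak_div_trough h2 h1 p₁ p₂
  have hzero := (Bateman.tendsto_peak_div_trough_nhdsNE_zero (h2.trans h1).ne' h2.ne' h1.ne'
    p₁ p₂).mono_left (nhdsGT_le_nhdsNE 0)
  have htop := Bateman.tendsto_peak_div_trough_atTop h2 h1 hp
  exact ⟨hcont, hzero, htop, isPreconnected_Ioi.intermediate_value_Ioi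
    (le_principal_iff.2 self_mem_nhdsWithin) (le_principal_iff.2 (Ioi_mem_atTop 0))
    hcont hzero htop⟩
end

section
/- Let κ_a > κ_e > 0, d, γ, τ > 0, α = e^{-κ_a τ}, β = e^{-κ_e τ}, z = 1-α, w = 1-β, p₁ = -κ_a/(κ_a-κ_e), p₂ = -κ_e/(κ_a-κ_e), p₃ = (κ_a/κ_e)^{p₁}, p₄ = (κ_a/κ_e)^{p₂}. Then the width ℓ(d,τ) = (κ_a d γ/(κ_a-κ_e))[(p₄ - p₃)(w^{p₁}/z^{p₂}) + (z - w)/(z w)] is strictly positive, and lim_{τ→∞} ℓ(d,τ) = (κ_a d γ/(κ_a-κ_e))[(κ_a/κ_e)^{p₂} - (κ_a/κ_e)^{p₁}] > 0. -/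
/-! For `τ > 0` we have `0 < w < z < 1`, and `p₁ < p₂` with `κa / κe > 1`, so both summands of the
bracket are positive. As `τ → ∞` both `z` and `w` tend to `1`, so the rational summand vanishes and
the power quotient tends to `1`. -/

open Filter Topology Real

lemma one_sub_exp_neg_mul_pos {k τ : ℝ} (hk : 0 < k) (hτ : 0 < τ) : 0 < 1 - exp (-k * τ) := by
  rw [sub_pos, exp_lt_one_iff]
  nlinarith

lemma one_sub_exp_neg_mul_lt_of_lt {k k' τ : ℝ} (hk : k < k') (hτ : 0 < τ) :
    1 - exp (-k * τ) < 1 - exp (-k' * τ) := by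
  rw [sub_lt_sub_iff_left, exp_lt_exp]
  nlinarith

lemma tendsto_one_sub_exp_neg_mul_atTop {k : ℝ} (hk : 0 < k) :
    Tendsto (fun τ => 1 - exp (-k * τ)) atTop (𝓝 1) := by
  have h : Tendsto (fun τ => exp (-k * τ)) atTop (𝓝 0) :=
    tendsto_exp_atBot.comp (tendsto_id.const_mul_atTop_of_neg (neg_neg_of_pos hk))
  simpa using tendsto_const_nhds.sub h

theorem therapeutic_range_width (κa κe d γ : ℝ) (h1 : κa > κe) (h2 : κe > 0)
    (hd : 0 < d) (hγ : 0 < γ)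
    (p₁ p₂ : ℝ) (hp1 : p₁ = -κa / (κa - κe)) (hp2 : p₂ = -κe / (κa - κe))
    (ℓ : ℝ → ℝ)
    (hℓ : ∀ τ : ℝ, ℓ τ = (κa * d * γ / (κa - κe)) *
      (((κa / κe) ^ p₂ - (κa / κe) ^ p₁) *
          ((1 - Real.exp (-κe * τ)) ^ p₁ / (1 - Real.exp (-κa * τ)) ^ p₂) +
        ((1 - Real.exp (-κa * τ)) - (1 - Real.exp (-κe * τ))) /
          ((1 - Real.exp (-κa * τ)) * (1 - Real.exp (-κe * τ))))) :
    (∀ τ : ℝ, 0 < τ → 0 < ℓ τ) ∧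
    Filter.Tendsto ℓ Filter.atTop
      (nhds ((κa * d * γ / (κa - κe)) * ((κa / κe) ^ p₂ - (κa / κe) ^ p₁))) ∧
    0 < (κa * d * γ / (κa - κe)) * ((κa / κe) ^ p₂ - (κa / κe) ^ p₁) := by
  have hκa : 0 < κa := h2.trans h1
  have hC : 0 < κa * d * γ / (κa - κe) := div_pos (by positivity) (sub_pos.mpr h1)
  have hA : 0 < (κa / κe) ^ p₂ - (κa / κe) ^ p₁ := by
    refine sub_pos.mpr (rpow_lt_rpow_of_exponent_lt ((one_lt_div h2).mpr h1) ?_)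
    rw [hp1, hp2]
    exact div_lt_div_of_pos_right (by linarith) (sub_pos.mpr h1)
  refine ⟨fun τ hτ => ?_, ?_, mul_pos hC hA⟩
  · have hz := one_sub_exp_neg_mul_pos hκa hτ
    have hw := one_sub_exp_neg_mul_pos h2 hτ
    have hwz := one_sub_exp_neg_mul_lt_of_lt h1 hτ
    rw [hℓ]
    exact mul_pos hC (add_pos (mul_pos hA (by positivity))
      (div_pos (sub_pos.mpr hwz) (mul_pos hz hw)))
  · have hz := tendsto_one_sub_exp_neg_mul_atTop hκa
    have hw := tendsto_one_sub_exp_neg_mul_atTop h2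
    rw [funext hℓ]
    simpa using tendsto_const_nhds.mul ((tendsto_const_nhds.mul
      ((hw.rpow_const (.inl one_ne_zero)).div (hz.rpow_const (.inl one_ne_zero)) (by simp))).add
      ((hz.sub hw).div (hz.mul hw) (by simp)))
end
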